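/- (Theorem 1) Let α ≥ 0, ν > 1, and λ > 0. Define J_β(λ, ν) = ∫₀^∞ u(x) u(x)ᵀ f(x; λ, ν)^(1+β) dx, ξ_α(λ, ν) = ∫₀^∞ u(x) f(x; λ, ν)^(1+α) dx, K_α(λ, ν) = J_{2α}(λ, ν) − ξ_α ξ_αᵀ, and the asymptotic covariance matrix Σ_α(λ, ν) = J_α(λ, ν)⁻¹ K_α(λ, ν) J_α(λ, ν)⁻¹, where u(x) = (u_λ(x), u_ν(x))ᵀ is the GE score vector. Assume J_α(1, ν) is invertible. Then: (i) Σ_α(λ, ν)_{11} = λ² Σ_α(1, ν)_{11}; (ii) Σ_α(λ, ν)_{12} = Σ_α(λ, ν)_{21} = λ Σ_α(1, ν)_{12}; (iii) Σ_α(λ, ν)_{22} = Σ_α(1, ν)_{22}, i.e. Σ_{22} is independent of λ. -/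

import Mathlib

open Real Set

/-- The generalized exponential (GE) density with rate `l > 0` and shape `v > 0`. -/
noncomputable def geDensity (l v x : ℝ) : ℝ :=
  l * v * Real.exp (-(l * x)) * (1 - Real.exp (-(l * x))) ^ (v - 1)

/-- The GE score vector `u(x) = (u_λ(x), u_ν(x))ᵀ`. -/
noncomputable def geScore (l v x : ℝ) : Fin 2 → ℝ :=
  ![1 / l - x + (v - 1) * x * Real.exp (-(l * x)) / (1 - Real.exp (-(l * x))),
    1 / v + Real.log (1 - Real.exp (-(l * x)))]

/-- `J_β(λ, ν) = ∫₀^∞ u(x) u(x)ᵀ f(x; λ, ν)^(1+β) dx`. -/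
noncomputable def geJ (b l v : ℝ) : Matrix (Fin 2) (Fin 2) ℝ :=
  Matrix.of fun i j =>
    ∫ x in Ioi (0 : ℝ), geScore l v x i * geScore l v x j * geDensity l v x ^ (1 + b)

/-- `ξ_α(λ, ν) = ∫₀^∞ u(x) f(x; λ, ν)^(1+α) dx`. -/
noncomputable def geXi (a l v : ℝ) : Fin 2 → ℝ := fun i =>
  ∫ x in Ioi (0 : ℝ), geScore l v x i * geDensity l v x ^ (1 + a)

/-- `K_α(λ, ν) = J_{2α}(λ, ν) − ξ_α(λ, ν) ξ_α(λ, ν)ᵀ`. -/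
noncomputable def geK (a l v : ℝ) : Matrix (Fin 2) (Fin 2) ℝ :=
  geJ (2 * a) l v - Matrix.of fun i j => geXi a l v i * geXi a l v j

/-- The asymptotic covariance matrix `Σ_α(λ, ν) = J_α⁻¹ K_α J_α⁻¹` of the rescaled MDPDE. -/
noncomputable def geSigma (a l v : ℝ) : Matrix (Fin 2) (Fin 2) ℝ :=
  (geJ a l v)⁻¹ * geK a l v * (geJ a l v)⁻¹

/-!
Substituting `y = λx` gives `f(x; λ, ν) = λ f(λx; 1, ν)` and `u(x; λ, ν) = D u(λx; 1, ν)` with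
`D = diag(λ⁻¹, 1)`, so `J_β(λ, ν) = λ^β D J_β(1, ν) D` and `K_α(λ, ν) = λ^{2α} D K_α(1, ν) D`.
In the sandwich `J⁻¹ K J⁻¹` the powers of `λ` cancel and `Σ_α(λ, ν) = D⁻¹ Σ_α(1, ν) D⁻¹`; the
entries of `D⁻¹ = diag(λ, 1)` give the three scaling laws, and symmetry of `Σ` gives `Σ₂₁ = Σ₁₂`.
-/

namespace Matrix

variable {n R : Type*} [Fintype n] [DecidableEq n] [Field R]

theorem inv_mul_mul_inv_smul_conj {D : Matrix n n R} (hD : IsUnit D.det) {c : R} (hc : c ≠ 0)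
    (J K : Matrix n n R) :
    (c • (D * J * D))⁻¹ * ((c * c) • (D * K * D)) * (c • (D * J * D))⁻¹
      = D⁻¹ * (J⁻¹ * K * J⁻¹) * D⁻¹ := by
  have : Invertible c := invertibleOfNonzero hc
  have hinv : (c • (D * J * D))⁻¹ = c⁻¹ • (D⁻¹ * J⁻¹ * D⁻¹) := by
    rw [← smul_mul, ← smul_mul, mul_inv_rev, mul_inv_rev, inv_smul D c hD, invOf_eq_inv]
    simp only [mul_smul_comm, mul_assoc]
  rw [hinv]
  simp only [smul_mul, mul_smul_comm, smul_smul]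
  rw [show c⁻¹ * (c * c * c⁻¹) = 1 by field_simp, one_smul]
  simp only [mul_assoc, mul_nonsing_inv_cancel_left _ _ hD, nonsing_inv_mul_cancel_left _ _ hD]

end Matrix

open Matrix MeasureTheory

theorem setIntegral_Ioi_zero_of_eq_comp_mul {f g : ℝ → ℝ} {l C : ℝ} (hl : 0 < l)
    (h : ∀ x > 0, f x = l * C * g (l * x)) :
    ∫ x in Ioi 0, f x = C * ∫ x in Ioi 0, g x := by
  rw [setIntegral_congr_fun measurableSet_Ioi h, integral_const_mul,
    integral_comp_mul_left_Ioi g 0 hl, mul_zero, smul_eq_mul]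
  field_simp

theorem geDensity_eq_mul_comp_mul (l v x : ℝ) : geDensity l v x = l * geDensity 1 v (l * x) := by
  simp only [geDensity, one_mul]; ring

theorem geDensity_one_nonneg {v : ℝ} (hv : 0 < v) {y : ℝ} (hy : 0 < y) :
    0 ≤ geDensity 1 v y := by
  have hexp : Real.exp (-(1 * y)) < 1 := Real.exp_lt_one_iff.mpr (by linarith)
  have := Real.rpow_nonneg (sub_nonneg.mpr hexp.le) (v - 1)
  unfold geDensity
  positivity

theorem geDensity_rpow_eq_mul_rpow {v : ℝ} (hv : 0 < v) {l x : ℝ} (hl : 0 < l) (hx : 0 < x)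
    (p : ℝ) :
    geDensity l v x ^ p = l ^ p * geDensity 1 v (l * x) ^ p := by
  rw [geDensity_eq_mul_comp_mul, Real.mul_rpow hl.le (geDensity_one_nonneg hv (mul_pos hl hx))]

theorem geScore_eq_mul_comp_mul (v x : ℝ) {l : ℝ} (hl : l ≠ 0) (i : Fin 2) :
    geScore l v x i = ![l⁻¹, 1] i * geScore 1 v (l * x) i := by
  fin_cases i
  · simp only [geScore, Fin.zero_eta, Matrix.cons_val_zero, one_mul, div_eq_mul_inv]
    field_simp
  · simp [geScore]

theorem geJ_isSymm (b l v : ℝ) : (geJ b l v).IsSymm :=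
  IsSymm.ext_iff.mpr fun i j => by simp only [geJ, of_apply, mul_comm (geScore l v _ j)]

theorem geSigma_isSymm (a l v : ℝ) : (geSigma a l v).IsSymm := by
  have hK : (geK a l v).IsSymm :=
    (geJ_isSymm _ _ _).sub (IsSymm.ext_iff.mpr fun i j => by simp only [of_apply, mul_comm])
  rw [IsSymm, geSigma, transpose_mul, transpose_mul, (geJ_isSymm a l v).inv.eq, hK.eq, mul_assoc]

theorem geJ_apply_eq_mul {v l : ℝ} (hv : 0 < v) (hl : 0 < l) (b : ℝ) (i j : Fin 2) :
    geJ b l v i j = l ^ b * ![l⁻¹, 1] i * ![l⁻¹, 1] j * geJ b 1 v i j := by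
  refine setIntegral_Ioi_zero_of_eq_comp_mul hl fun x hx => ?_
  rw [geScore_eq_mul_comp_mul v x hl.ne', geScore_eq_mul_comp_mul v x hl.ne',
    geDensity_rpow_eq_mul_rpow hv hl hx, Real.rpow_add hl, Real.rpow_one]
  field_simp

theorem geXi_apply_eq_mul {v l : ℝ} (hv : 0 < v) (hl : 0 < l) (a : ℝ) (i : Fin 2) :
    geXi a l v i = l ^ a * ![l⁻¹, 1] i * geXi a 1 v i := by
  refine setIntegral_Ioi_zero_of_eq_comp_mul hl fun x hx => ?_
  rw [geScore_eq_mul_comp_mul v x hl.ne', geDensity_rpow_eq_mul_rpow hv hl hx, Real.rpow_add hl,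
    Real.rpow_one]
  field_simp

theorem geJ_eq_smul {v l : ℝ} (hv : 0 < v) (hl : 0 < l) (b : ℝ) :
    geJ b l v = l ^ b • (diagonal ![l⁻¹, 1] * geJ b 1 v * diagonal ![l⁻¹, 1]) := by
  ext i j
  rw [Matrix.smul_apply, mul_diagonal, diagonal_mul, geJ_apply_eq_mul hv hl, smul_eq_mul]
  ring

theorem geK_eq_smul {v l : ℝ} (hv : 0 < v) (hl : 0 < l) (a : ℝ) :
    geK a l v = (l ^ a * l ^ a) • (diagonal ![l⁻¹, 1] * geK a 1 v * diagonal ![l⁻¹, 1]) := by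
  ext i j
  have h2a : l ^ (2 * a) = l ^ a * l ^ a := by rw [two_mul, Real.rpow_add hl]
  simp only [geK, Matrix.smul_apply, mul_diagonal, diagonal_mul, smul_eq_mul, Matrix.sub_apply,
    of_apply, geJ_apply_eq_mul hv hl, geXi_apply_eq_mul hv hl, h2a]
  ring

theorem geSigma_eq_diagonal_mul_mul_diagonal {v l : ℝ} (hv : 0 < v) (hl : 0 < l) (a : ℝ) :
    geSigma a l v = diagonal ![l, 1] * geSigma a 1 v * diagonal ![l, 1] := by
  have hD : diagonal ![l, 1] * diagonal ![l⁻¹, 1] = 1 := by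
    rw [diagonal_mul_diagonal, ← diagonal_one]
    congr 1
    ext i
    fin_cases i <;> simp [hl.ne']
  rw [geSigma, geJ_eq_smul hv hl, geK_eq_smul hv hl,
    inv_mul_mul_inv_smul_conj (isUnit_det_of_left_inverse hD) (Real.rpow_pos_of_pos hl a).ne',
    inv_eq_left_inv hD, geSigma]

theorem geSigma_scaling_general (a v : ℝ) (hv : 1 < v) :
    ∀ l : ℝ, 0 < l →
      geSigma a l v 0 0 = l ^ 2 * geSigma a 1 v 0 0 ∧
      geSigma a l v 0 1 = l * geSigma a 1 v 0 1 ∧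
      geSigma a l v 1 0 = l * geSigma a 1 v 0 1 ∧
      geSigma a l v 1 1 = geSigma a 1 v 1 1 := by
  intro l hl
  simp only [geSigma_eq_diagonal_mul_mul_diagonal (zero_lt_one.trans hv) hl, mul_diagonal,
    diagonal_mul, (geSigma_isSymm a 1 v).apply 0 1, cons_val_zero, cons_val_one]
  exact ⟨by ring, by ring, by ring, by ring⟩

/-- Theorem 1: scaling of the asymptotic covariance matrix `Σ_α(λ, ν)` of the rescaled
MDPDE in the rate parameter `λ`: `Σ₁₁ ∝ λ²`, `Σ₁₂ = Σ₂₁ ∝ λ`, and `Σ₂₂` is independent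
of `λ`. -/
theorem geSigma_scaling (a v : ℝ) (ha : 0 ≤ a) (hv : 1 < v)
    (hJ : IsUnit (geJ a 1 v)) :
    ∀ l : ℝ, 0 < l →
      geSigma a l v 0 0 = l ^ 2 * geSigma a 1 v 0 0 ∧
      geSigma a l v 0 1 = l * geSigma a 1 v 0 1 ∧
      geSigma a l v 1 0 = l * geSigma a 1 v 0 1 ∧
      geSigma a l v 1 1 = geSigma a 1 v 1 1 :=
  geSigma_scaling_general a v hv
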